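/- Let β, b ∈ ℕ^m and A ∈ ℕ^{m×n} with columns A_1,…,A_n satisfy b ≤ β and A_k ≤ β for all k. If 𝐲 = (y[k,u]) is a real vector with y[k,u] ≥ 0 for all 1 ≤ k ≤ n and u ∈ ℕ^m, u ≤ β − A_k, satisfying Θ𝐲 = 𝐛, then the vector x̂ ∈ ℝ^n defined by x̂_k := Σ_{u ≤ β−A_k} y[k,u] satisfies A x̂ = b and x̂ belongs to the convex hull (in ℝ^n) of the set {x ∈ ℕ^n : Ax = b}. -/

import Mathlib

/-- Row index set: vectors `w ∈ ℕ^m` with `w ≤ β` (entrywise). -/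
abbrev RowIdx (m : ℕ) (β : Fin m → ℕ) : Type := ∀ j : Fin m, Fin (β j + 1)

/-- Column index set: pairs `(k, u)` with `1 ≤ k ≤ n` and `u ∈ ℕ^m`, `u ≤ β - A_k`. -/
abbrev ColIdx (m n : ℕ) (β : Fin m → ℕ) (A : Matrix (Fin m) (Fin n) ℕ) : Type :=
  Σ k : Fin n, ∀ j : Fin m, Fin (β j - A j k + 1)

/-- The network matrix `Θ`: `Θ[w;(k,u)] = -1` if `w = u`, `+1` if `w = u + A_k`,
and `0` otherwise. -/
noncomputable def theta (m n : ℕ) (β : Fin m → ℕ) (A : Matrix (Fin m) (Fin n) ℕ) :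
    Matrix (RowIdx m β) (ColIdx m n β A) ℝ := Matrix.of fun w c =>
  if (fun j => (w j : ℕ)) = (fun j => (c.2 j : ℕ)) then -1
  else if (fun j => (w j : ℕ)) = (fun j => (c.2 j : ℕ) + A j c.1) then 1 else 0

/-- The vector `𝐛`: `𝐛[w] = (1 if w = b else 0) - (1 if w = 0 else 0)`. -/
noncomputable def bvec (m : ℕ) (β b : Fin m → ℕ) : RowIdx m β → ℝ := fun w =>
  (if (fun j => (w j : ℕ)) = b then 1 else 0)
    - (if (fun j => (w j : ℕ)) = (fun _ => (0 : ℕ)) then 1 else 0)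

/-!
Read Θ as the incidence matrix of the directed graph on `{w ≤ β}` with an arc `u → u + A_k`
for every column `(k, u)`, except that a loop (`A_k = 0`) is recorded as `-e_u`. The entries of
`𝐛` sum to zero, so a nonnegative solution carries no weight on loops and `𝐲` is a unit flow
from `0` to `b`. The coordinate sum strictly increases along every other arc, so the flow lives
on an acyclic graph, and repeatedly subtracting the largest multiple of a `0/1` flow supported on
positive arcs writes `𝐲` as a convex combination of `0/1` unit flows from `0` to `b`. The map
`𝐲 ↦ x̂` is linear and sends such a `0/1` flow to the vector counting how often each column is
used, an `x ∈ ℕⁿ` with `Ax = b` because the steps `A_k` telescope from `0` to `b`.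
-/

open Finset
open scoped Pointwise

lemma Fintype.linearCombination_indicator {R M ι : Type*} [Semiring R] [AddCommMonoid M]
    [Module R M] [Fintype ι] (v : ι → M) (S : Finset ι) :
    Fintype.linearCombination R v ((S : Set ι).indicator 1) = ∑ i ∈ S, v i := by
  classical
  simp [Fintype.linearCombination_apply, Set.indicator_apply, ite_smul, Finset.sum_ite_mem]

namespace Flow

section Algebra

variable {𝕜 V E : Type*} [CommRing 𝕜] [Fintype E] [DecidableEq V] (src tgt : E → V)

def boundary : (E → 𝕜) →ₗ[𝕜] V → 𝕜 :=
  Fintype.linearCombination 𝕜 fun e => Pi.single (tgt e) 1 - Pi.single (src e) 1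

lemma boundary_apply (f : E → 𝕜) (v : V) :
    boundary src tgt f v = ∑ e with tgt e = v, f e - ∑ e with src e = v, f e := by
  simp [boundary, Fintype.linearCombination_apply, Finset.sum_apply, Pi.single_apply,
    mul_sub, Finset.sum_sub_distrib, Finset.sum_filter, eq_comm]

lemma sum_boundary_smul [Fintype V] {M : Type*} [AddCommGroup M] [Module 𝕜 M] (π : V → M)
    (f : E → 𝕜) :
    ∑ v, boundary src tgt f v • π v = ∑ e, f e • (π (tgt e) - π (src e)) := by
  simp only [boundary, Fintype.linearCombination_apply, Finset.sum_apply, Finset.sum_smul]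
  rw [Finset.sum_comm]
  refine Finset.sum_congr rfl fun e _ => ?_
  simp [Pi.single_apply, mul_sub, sub_smul, Finset.sum_sub_distrib, smul_sub]

lemma boundary_indicator (S : Finset E) :
    boundary src tgt ((S : Set E).indicator 1) =
      ∑ e ∈ S, (Pi.single (tgt e) 1 - Pi.single (src e) 1 : V → 𝕜) :=
  Fintype.linearCombination_indicator _ S

variable (𝕜) in
def indicatorFlows (s t : V) : Set (E → 𝕜) :=
  {χ | ∃ S : Finset E, χ = (S : Set E).indicator 1 ∧
    boundary src tgt χ = Pi.single t 1 - Pi.single s 1}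

end Algebra

variable {𝕜 V E : Type*} [Field 𝕜] [LinearOrder 𝕜] [IsStrictOrderedRing 𝕜]
  [Fintype E] [DecidableEq V] {src tgt : E → V} {φ : V → ℕ} {f : E → 𝕜}

theorem eq_zero_of_boundary_eq_zero [Fintype V] (hf : 0 ≤ f)
    (hφ : ∀ e, 0 < f e → φ (src e) < φ (tgt e)) (h : boundary src tgt f = 0) : f = 0 := by
  have key := sum_boundary_smul src tgt (fun v => (φ v : 𝕜)) f
  simp only [h, Pi.zero_apply, zero_smul, Finset.sum_const_zero] at key
  have hterm : ∀ e, 0 < f e → 0 < f e • ((φ (tgt e) : 𝕜) - φ (src e)) := fun e he =>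
    smul_pos he (sub_pos.2 (by exact_mod_cast hφ e he))
  funext e
  by_contra hne
  refine (hterm e ((hf e).lt_of_ne' hne)).ne' ?_
  refine (Finset.sum_eq_zero_iff_of_nonneg fun e _ => ?_).1 key.symm e (mem_univ e)
  rcases (hf e).eq_or_lt with he | he
  · simp [← he]
  · exact (hterm e he).le

lemma exists_pos_incoming (hf : 0 ≤ f) {v : V}
    (h : 0 < boundary src tgt f v + ∑ e with src e = v, f e) :
    ∃ e, tgt e = v ∧ 0 < f e := by
  rw [boundary_apply, sub_add_cancel, Finset.sum_pos_iff_of_nonneg fun e _ => hf e] at h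
  obtain ⟨e, he, hpos⟩ := h
  exact ⟨e, (Finset.mem_filter.1 he).2, hpos⟩

/-- Walk backwards from `e` along arcs of positive flow until reaching `s`; the potential
bounds the length of the walk and keeps its arcs distinct. -/
theorem exists_indicatorFlow_of_pos (hf : 0 ≤ f)
    (hφ : ∀ e, 0 < f e → φ (src e) < φ (tgt e)) {s : V}
    (hbd : ∀ v ≠ s, 0 ≤ boundary src tgt f v) (e : E) (he : 0 < f e) :
    ∃ S : Finset E, e ∈ S ∧ (∀ e' ∈ S, 0 < f e' ∧ φ (tgt e') ≤ φ (tgt e)) ∧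
      boundary src tgt ((S : Set E).indicator (1 : E → 𝕜)) =
        Pi.single (tgt e) 1 - Pi.single s 1 := by
  classical
  induction hd : φ (tgt e) using Nat.strong_induction_on generalizing e with
  | _ d ih =>
    subst hd
    by_cases hs : src e = s
    · refine ⟨{e}, mem_singleton_self e, by simp [he], ?_⟩
      rw [boundary_indicator, sum_singleton, hs]
    obtain ⟨e', he't, he'⟩ : ∃ e', tgt e' = src e ∧ 0 < f e' := by
      have : f e ≤ ∑ e' with src e' = src e, f e' :=
        Finset.single_le_sum (fun e' _ => hf e') (by simp)
      exact exists_pos_incoming hf (by linarith [hbd _ hs])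
    have hlt : φ (tgt e') < φ (tgt e) := he't ▸ hφ e he
    obtain ⟨S, -, hS, hbS⟩ := ih _ hlt e' he' rfl
    have heS : e ∉ S := fun h => not_le.2 hlt (hS e h).2
    refine ⟨insert e S, mem_insert_self e S, ?_, ?_⟩
    · simp only [mem_insert, forall_eq_or_imp]
      exact ⟨⟨he, le_rfl⟩, fun e'' h => ⟨(hS e'' h).1, (hS e'' h).2.trans hlt.le⟩⟩
    · rw [boundary_indicator, sum_insert heS, ← boundary_indicator, hbS, he't]
      abel

theorem exists_indicatorFlow_le [Fintype V] {s t : V} (hst : s ≠ t) {c : 𝕜} (hc : 0 < c)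
    (hf : 0 ≤ f) (hφ : ∀ e, 0 < f e → φ (src e) < φ (tgt e))
    (hbd : boundary src tgt f = c • (Pi.single t 1 - Pi.single s 1)) :
    ∃ χ ∈ indicatorFlows 𝕜 src tgt s t, ∃ ε : 𝕜, 0 < ε ∧ ε ≤ c ∧ ε • χ ≤ f ∧
      (ε < c → ∃ e, 0 < f e ∧ f e = ε * χ e) := by
  classical
  have hbd_apply : ∀ v,
      boundary src tgt f v = c * (Pi.single t 1 - Pi.single s 1 : V → 𝕜) v :=
    fun v => by rw [hbd]; rfl
  obtain ⟨e₀, rfl, he₀⟩ : ∃ e, tgt e = t ∧ 0 < f e := by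
    refine exists_pos_incoming (src := src) hf ?_
    have := Finset.sum_nonneg fun e (_ : e ∈ ({e | src e = t} : Finset E)) => hf e
    simp only [hbd_apply, Pi.sub_apply, Pi.single_eq_same, Pi.single_eq_of_ne hst.symm] at *
    linarith
  have hbd_nonneg : ∀ v ≠ s, 0 ≤ boundary src tgt f v := fun v hv => by
    rw [hbd_apply, Pi.sub_apply, Pi.single_eq_of_ne hv, sub_zero]
    exact mul_nonneg hc.le (by rw [Pi.single_apply]; split_ifs <;> norm_num)
  obtain ⟨S, he₀S, hS, hbS⟩ := exists_indicatorFlow_of_pos hf hφ hbd_nonneg e₀ he₀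
  obtain ⟨e₁, he₁S, he₁⟩ := Finset.exists_mem_eq_inf' ⟨e₀, he₀S⟩ f
  refine ⟨_, ⟨S, rfl, hbS⟩, min c (f e₁), lt_min hc (hS e₁ he₁S).1, min_le_left _ _,
    fun e => ?_, fun hlt => ⟨e₁, (hS e₁ he₁S).1, ?_⟩⟩
  · by_cases he : e ∈ S
    · simpa [he, he₁] using Or.inr (Finset.inf'_le f he)
    · simpa [he] using hf e
  · rw [min_eq_right ((min_lt_iff.1 hlt).resolve_left (lt_irrefl c)).le]
    simp [he₁S]

theorem mem_smul_convexHull_indicatorFlows [Fintype V] {s t : V} (hst : s ≠ t) {c : 𝕜}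
    (hc : 0 < c) (hf : 0 ≤ f) (hφ : ∀ e, 0 < f e → φ (src e) < φ (tgt e))
    (hbd : boundary src tgt f = c • (Pi.single t 1 - Pi.single s 1)) :
    f ∈ c • convexHull 𝕜 (indicatorFlows 𝕜 src tgt s t) := by
  classical
  induction hN : #{e | 0 < f e} using Nat.strong_induction_on generalizing f c with
  | _ N ih =>
    obtain ⟨χ, hχ, ε, hε, hεc, hεf, hpeel⟩ := exists_indicatorFlow_le hst hc hf hφ hbd
    obtain ⟨S, rfl, hbχ⟩ := id hχ
    set f' := f - ε • (S : Set E).indicator (1 : E → 𝕜)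
    have hf' : 0 ≤ f' := sub_nonneg.2 hεf
    have hsupp : ∀ e, 0 < f' e → 0 < f e := fun e he =>
      (mul_nonneg hε.le (Set.indicator_nonneg (fun _ _ => zero_le_one) e)).trans_lt
        (sub_pos.1 he)
    have hbd' : boundary src tgt f' = (c - ε) • (Pi.single t 1 - Pi.single s 1) := by
      rw [map_sub, map_smul, hbd, hbχ, sub_smul]
    have hχmem : ε • (S : Set E).indicator 1 ∈
        ε • convexHull 𝕜 (indicatorFlows 𝕜 src tgt s t) :=
      Set.smul_mem_smul_set (subset_convexHull 𝕜 _ hχ)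
    rcases hεc.lt_or_eq with hlt | rfl
    · obtain ⟨e, hfe, hfe'⟩ := hpeel hlt
      have hcard : #{e | 0 < f' e} < N := hN ▸ Finset.card_lt_card
        ((Finset.ssubset_iff_of_subset fun e => by simpa using hsupp e).2
          ⟨e, by simpa using hfe, by simp [f', hfe']⟩)
      have hf'mem := ih _ hcard (sub_pos.2 hlt) hf' (fun e he => hφ e (hsupp e he)) hbd' rfl
      rw [show f = ε • (S : Set E).indicator 1 + f' by simp [f'], ← add_sub_cancel ε c,
        (convex_convexHull 𝕜 _).add_smul hε.le (sub_nonneg.2 hlt.le)]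
      exact Set.add_mem_add hχmem hf'mem
    · have hf'0 : f' = 0 :=
        eq_zero_of_boundary_eq_zero hf' (fun e he => hφ e (hsupp e he)) (by simp [hbd'])
      rwa [show f = ε • (S : Set E).indicator 1 by simpa [f', sub_eq_zero] using hf'0]

theorem mem_convexHull_indicatorFlows [Fintype V] {s t : V} (hf : 0 ≤ f)
    (hφ : ∀ e, 0 < f e → φ (src e) < φ (tgt e))
    (hbd : boundary src tgt f = Pi.single t 1 - Pi.single s 1) :
    f ∈ convexHull 𝕜 (indicatorFlows 𝕜 src tgt s t) := by
  by_cases hst : s = t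
  · subst hst
    obtain rfl : f = 0 := eq_zero_of_boundary_eq_zero hf hφ (by simp [hbd])
    exact subset_convexHull 𝕜 _ ⟨∅, by ext; simp, by simp⟩
  · simpa using mem_smul_convexHull_indicatorFlows hst one_pos hf hφ (by rw [hbd, one_smul])

end Flow

section Network

open Flow

variable {m n : ℕ} {β : Fin m → ℕ} {A : Matrix (Fin m) (Fin n) ℕ}

def arcTail (c : ColIdx m n β A) : RowIdx m β :=
  fun j => ⟨c.2 j, by have := (c.2 j).isLt; omega⟩

def arcHead (hA : ∀ k j, A j k ≤ β j) (c : ColIdx m n β A) : RowIdx m β :=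
  fun j => ⟨c.2 j + A j c.1, by have := (c.2 j).isLt; have := hA c.1 j; omega⟩

def bNode {b : Fin m → ℕ} (hb : ∀ j, b j ≤ β j) : RowIdx m β :=
  fun j => ⟨b j, by have := hb j; omega⟩

def rowLevel (w : RowIdx m β) : ℕ := ∑ j, (w j : ℕ)

def columnTotal : (ColIdx m n β A → ℝ) →ₗ[ℝ] Fin n → ℝ :=
  Fintype.linearCombination ℝ fun c => Pi.single c.1 1

lemma theta_apply (hA : ∀ k j, A j k ≤ β j) (w : RowIdx m β) (c : ColIdx m n β A) :
    theta m n β A w c = if w = arcTail c then -1 else if w = arcHead hA c then 1 else 0 := by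
  simp [theta, funext_iff, Fin.ext_iff, arcTail, arcHead]

lemma bvec_eq {b : Fin m → ℕ} (hb : ∀ j, b j ≤ β j) :
    bvec m β b = Pi.single (bNode hb) 1 - Pi.single 0 1 := by
  funext w
  simp only [bvec, Pi.sub_apply, Pi.single_apply]
  congr 2 <;> simp only [funext_iff, Fin.ext_iff, bNode, Fin.val_zero, Pi.zero_apply]

lemma sum_theta_apply (hA : ∀ k j, A j k ≤ β j) (c : ColIdx m n β A) :
    ∑ w, theta m n β A w c = if arcTail c = arcHead hA c then -1 else 0 := by
  simp only [theta_apply hA]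
  split_ifs with h
  · simp [← h, Finset.sum_ite, Finset.filter_eq']
  · simp [Finset.sum_ite, Finset.filter_eq', Finset.filter_ne', Ne.symm h]

lemma eq_zero_of_theta_mulVec_eq (hA : ∀ k j, A j k ≤ β j) {b : Fin m → ℕ}
    (hb : ∀ j, b j ≤ β j) {y : ColIdx m n β A → ℝ} (hy : 0 ≤ y)
    (hΘ : (theta m n β A).mulVec y = bvec m β b) (c : ColIdx m n β A)
    (hc : arcTail c = arcHead hA c) : y c = 0 := by
  have hsum : ∑ w, (theta m n β A).mulVec y w = -∑ c with arcTail c = arcHead hA c, y c := by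
    simp only [Matrix.mulVec, dotProduct]
    rw [Finset.sum_comm]
    simp only [← Finset.sum_mul, sum_theta_apply hA, Finset.sum_filter, ← Finset.sum_neg_distrib]
    exact Finset.sum_congr rfl fun c _ => by split_ifs <;> simp
  have hb0 : ∑ w, bvec m β b w = 0 := by simp [bvec_eq hb, Finset.sum_sub_distrib]
  rw [hΘ, hb0, zero_eq_neg] at hsum
  exact (Finset.sum_eq_zero_iff_of_nonneg fun c _ => hy c).1 hsum c (by simp [hc])

lemma theta_mulVec_eq_boundary (hA : ∀ k j, A j k ≤ β j) {y : ColIdx m n β A → ℝ}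
    (hloop : ∀ c, arcTail c = arcHead hA c → y c = 0) :
    (theta m n β A).mulVec y = boundary arcTail (arcHead hA) y := by
  funext w
  simp only [Matrix.mulVec, dotProduct, boundary, Fintype.linearCombination_apply,
    Finset.sum_apply]
  refine Finset.sum_congr rfl fun c _ => ?_
  by_cases hc : arcTail c = arcHead hA c
  · simp [hloop c hc]
  · rw [theta_apply hA]
    by_cases h1 : w = arcTail c
    · simp [h1, hc]
    · by_cases h2 : w = arcHead hA c <;> simp [h1, h2, Ne.symm hc]

lemma rowLevel_arcTail_lt (hA : ∀ k j, A j k ≤ β j) {c : ColIdx m n β A}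
    (hc : arcTail c ≠ arcHead hA c) : rowLevel (arcTail c) < rowLevel (arcHead hA c) := by
  have hpos : 0 < ∑ j, A j c.1 := by
    refine Nat.pos_of_ne_zero fun h => hc ?_
    funext j
    simp [arcTail, arcHead, (Finset.sum_eq_zero_iff.1 h) j (mem_univ j)]
  simp only [rowLevel, arcTail, arcHead, Finset.sum_add_distrib]
  omega

lemma columnTotal_apply (y : ColIdx m n β A → ℝ) (k : Fin n) :
    columnTotal y k = ∑ u : ∀ j, Fin (β j - A j k + 1), y ⟨k, u⟩ := by
  simp only [columnTotal, Fintype.linearCombination_apply, Finset.sum_apply, Pi.smul_apply,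
    Pi.single_apply, smul_eq_mul, mul_ite, mul_one, mul_zero, Fintype.sum_sigma]
  rw [Finset.sum_eq_single k (fun k' _ hk' => by simp [Ne.symm hk']) (by simp)]
  simp

lemma sum_mul_columnTotal_eq (hA : ∀ k j, A j k ≤ β j) {b : Fin m → ℕ}
    (hb : ∀ j, b j ≤ β j) {f : ColIdx m n β A → ℝ}
    (hf : boundary arcTail (arcHead hA) f = Pi.single (bNode hb) 1 - Pi.single 0 1)
    (j : Fin m) :
    ∑ k, (A j k : ℝ) * columnTotal f k = b j := by
  calc ∑ k, (A j k : ℝ) * columnTotal f k = ∑ c, f c * A j c.1 := by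
        simp [columnTotal, Fintype.linearCombination_apply, Finset.sum_apply, Pi.single_apply,
          Finset.mul_sum]
        rw [Finset.sum_comm]
        simp [mul_comm]
    _ = ∑ w, boundary arcTail (arcHead hA) f w • ((w j : ℕ) : ℝ) := by
        rw [sum_boundary_smul]
        simp [arcHead, arcTail]
    _ = b j := by
        simp [hf, Pi.single_apply, sub_mul, ite_mul, Finset.sum_sub_distrib, bNode]

lemma columnTotal_mem_image (hA : ∀ k j, A j k ≤ β j) {b : Fin m → ℕ} (hb : ∀ j, b j ≤ β j)
    {χ : ColIdx m n β A → ℝ} (hχ : χ ∈ indicatorFlows ℝ arcTail (arcHead hA) 0 (bNode hb)) :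
    columnTotal χ ∈ (fun x : Fin n → ℕ => fun k => (x k : ℝ)) ''
      {x : Fin n → ℕ | ∀ j, ∑ k, A j k * x k = b j} := by
  obtain ⟨S, rfl, hbS⟩ := hχ
  have hx : columnTotal ((S : Set (ColIdx m n β A)).indicator 1) =
      fun k => ((#{c ∈ S | c.1 = k} : ℕ) : ℝ) := by
    funext k
    simp [columnTotal, Fintype.linearCombination_indicator, Finset.sum_apply, Pi.single_apply,
      Finset.sum_boole, eq_comm]
  refine ⟨_, fun j => ?_, hx.symm⟩
  have h := sum_mul_columnTotal_eq hA hb hbS j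
  simp only [hx] at h
  exact_mod_cast h

end Network

theorem stmt_10_general (m n : ℕ)
    (A : Matrix (Fin m) (Fin n) ℕ) (β b : Fin m → ℕ)
    (hb : ∀ j, b j ≤ β j) (hA : ∀ k j, A j k ≤ β j)
    (y : ColIdx m n β A → ℝ) (hy : ∀ c, 0 ≤ y c)
    (hΘ : (theta m n β A).mulVec y = bvec m β b) :
    (∀ j, ∑ k, (A j k : ℝ) * (∑ u : ∀ j' : Fin m, Fin (β j' - A j' k + 1), y ⟨k, u⟩)
        = (b j : ℝ)) ∧
    (fun k => ∑ u : ∀ j' : Fin m, Fin (β j' - A j' k + 1), y ⟨k, u⟩) ∈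
      convexHull ℝ ((fun x : Fin n → ℕ => fun k => (x k : ℝ)) ''
        {x : Fin n → ℕ | ∀ j, ∑ k, A j k * x k = b j}) := by
  have hloop := eq_zero_of_theta_mulVec_eq hA hb hy hΘ
  have hbd : Flow.boundary arcTail (arcHead hA) y = Pi.single (bNode hb) 1 - Pi.single 0 1 := by
    rw [← theta_mulVec_eq_boundary hA hloop, hΘ, bvec_eq hb]
  have hy_hull := Flow.mem_convexHull_indicatorFlows (φ := rowLevel) hy
    (fun c hc => rowLevel_arcTail_lt hA fun h => hc.ne' (hloop c h)) hbd
  have hx : (fun k => ∑ u : ∀ j' : Fin m, Fin (β j' - A j' k + 1), y ⟨k, u⟩) = columnTotal y :=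
    funext fun k => (columnTotal_apply y k).symm
  refine ⟨fun j => by simpa only [columnTotal_apply] using sum_mul_columnTotal_eq hA hb hbd j, ?_⟩
  have hsub : columnTotal '' Flow.indicatorFlows ℝ arcTail (arcHead hA) 0 (bNode hb) ⊆
      (fun x : Fin n → ℕ => fun k => (x k : ℝ)) '' {x | ∀ j, ∑ k, A j k * x k = b j} :=
    Set.image_subset_iff.2 fun χ hχ => columnTotal_mem_image hA hb hχ
  rw [hx]
  exact convexHull_mono hsub
    (columnTotal.image_convexHull _ ▸ Set.mem_image_of_mem columnTotal hy_hull)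

/-- Any nonnegative solution `𝐲` of `Θ𝐲 = 𝐛` projects (via `x̂ = E𝐲`) to a point
of the integer hull of `{x : Ax = b, x ≥ 0}`. -/
theorem stmt_10 (m n : ℕ) (hm : 0 < m) (hn : 0 < n)
    (A : Matrix (Fin m) (Fin n) ℕ) (β b : Fin m → ℕ)
    (hb : ∀ j, b j ≤ β j) (hA : ∀ k j, A j k ≤ β j)
    (y : ColIdx m n β A → ℝ) (hy : ∀ c, 0 ≤ y c)
    (hΘ : (theta m n β A).mulVec y = bvec m β b) :
    (∀ j, ∑ k, (A j k : ℝ) * (∑ u : ∀ j' : Fin m, Fin (β j' - A j' k + 1), y ⟨k, u⟩)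
        = (b j : ℝ)) ∧
    (fun k => ∑ u : ∀ j' : Fin m, Fin (β j' - A j' k + 1), y ⟨k, u⟩) ∈
      convexHull ℝ ((fun x : Fin n → ℕ => fun k => (x k : ℝ)) ''
        {x : Fin n → ℕ | ∀ j, ∑ k, A j k * x k = b j}) :=
  stmt_10_general m n A β b hb hA y hy hΘ
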